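/- arXiv:2203.13435 — 2 statements merged into one kernel-verified Lean document; each statement's English description precedes it below -/
import Mathlib

section
/- Let T = (V, A) be a polytree, let I⁰, Iᵗ be independent sets with |I⁰| = |Iᵗ| that are reconfigurable, and consider any reconfiguration sequence from I⁰ to Iᵗ. For each arc e ∈ A, the number of moves in the sequence that slide a token along e equals w(e; I⁰, Iᵗ) = |C⁻_e ∩ I⁰| − |C⁻_e ∩ Iᵗ|. -/
open scoped Classical

variable {V : Type*}

/-- The underlying undirected simple graph of a digraph given by its arc relation. -/
def underlying (A : V → V → Prop) : SimpleGraph V := SimpleGraph.fromRel A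

/-- A polytree: a loopless digraph without antiparallel arcs whose underlying graph is a tree. -/
def IsPolytree (A : V → V → Prop) : Prop :=
  (∀ v, ¬ A v v) ∧ (∀ u v, A u v → ¬ A v u) ∧ (underlying A).IsTree

/-- `x` lies in the weakly connected component of `T - (a,b)` containing the tail `a`. -/
def InCminus (A : V → V → Prop) (a b x : V) : Prop :=
  ((underlying A).deleteEdges {s(a, b)}).Reachable a x

/-- `w((a,b); X, Y) = |C⁻ ∩ X| - |C⁻ ∩ Y|`. -/
noncomputable def wArc [Fintype V] [DecidableEq V] (A : V → V → Prop)
    (X Y : Finset V) (a b : V) : ℤ :=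
  ((X.filter fun x => InCminus A a b x).card : ℤ) -
    ((Y.filter fun x => InCminus A a b x).card : ℤ)

/-- Independence in the underlying undirected graph. -/
def IndepF (A : V → V → Prop) (I : Finset V) : Prop :=
  ∀ u ∈ I, ∀ v ∈ I, ¬ (underlying A).Adj u v

/-- One token-sliding step along an arc, in its direction. -/
def IsStep [DecidableEq V] (A : V → V → Prop) (I J : Finset V) : Prop :=
  ∃ u v, A u v ∧ I \ J = {u} ∧ J \ I = {v}

/-- A reconfiguration sequence of independent sets under directed token sliding. -/
def IsReconfSeq [DecidableEq V] (A : V → V → Prop) {ℓ : ℕ}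
    (f : Fin (ℓ + 1) → Finset V) : Prop :=
  (∀ i, IndepF A (f i)) ∧ ∀ i : Fin ℓ, IsStep A (f i.castSucc) (f i.succ)

/-- `I` is reconfigurable into `J` under directed token sliding. -/
def Reconfigurable [DecidableEq V] (A : V → V → Prop) (I J : Finset V) : Prop :=
  ∃ (ℓ : ℕ) (f : Fin (ℓ + 1) → Finset V),
    IsReconfSeq A f ∧ f 0 = I ∧ f (Fin.last ℓ) = J

/-- A directed path in the digraph `A`, given by its (distinct) vertices in order. -/
structure DirPath (A : V → V → Prop) where
  len : ℕ
  vtx : Fin (len + 1) → V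
  inj : Function.Injective vtx
  arc : ∀ i : Fin len, A (vtx i.castSucc) (vtx i.succ)

namespace DirPath
variable {A : V → V → Prop}
/-- The source of a directed path. -/
def src (p : DirPath A) : V := p.vtx 0
/-- The sink of a directed path. -/
def snk (p : DirPath A) : V := p.vtx (Fin.last p.len)
/-- The second vertex `s'(P)` of a directed path. -/
def sndVtx (p : DirPath A) : V := p.vtx ⟨min 1 p.len, by omega⟩
/-- The second-to-last vertex `t'(P)` of a directed path. -/
def penVtx (p : DirPath A) : V := p.vtx ⟨p.len - 1, by omega⟩
/-- `v` is a vertex of the path `p`. -/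
def mem (p : DirPath A) (v : V) : Prop := ∃ i, p.vtx i = v
/-- `x` is an internal vertex of `p` (neither source nor sink). -/
def internal (p : DirPath A) (x : V) : Prop :=
  ∃ i : Fin (p.len + 1), p.vtx i = x ∧ i ≠ 0 ∧ i ≠ Fin.last p.len
end DirPath

/-- A directed path matching from `X` to `Y`: distinct sources forming `X`,
distinct sinks forming `Y`. -/
def IsDPM [DecidableEq V] {A : V → V → Prop} {k : ℕ}
    (X Y : Finset V) (P : Fin k → DirPath A) : Prop :=
  (Function.Injective fun i => (P i).src) ∧ (Function.Injective fun i => (P i).snk) ∧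
  (Finset.univ.image fun i => (P i).src) = X ∧ (Finset.univ.image fun i => (P i).snk) = Y

/-- The path-set conditions (P1)–(P4). -/
def PathSetConds [DecidableEq V] {A : V → V → Prop} {k : ℕ}
    (X Y : Finset V) (P : Fin k → DirPath A) : Prop :=
  (∀ i, 2 ≤ (P i).len) ∧ IsDPM X Y P ∧
  (∀ i j, i ≠ j → (P i).sndVtx ≠ (P j).sndVtx) ∧
  (∀ i j, i ≠ j → (P i).penVtx ≠ (P j).penVtx)

/-- Length of the (unique, when it exists) directed path from `u` to `v`. -/
noncomputable def ddist (A : V → V → Prop) (u v : V) : ℕ :=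
  sInf {n | ∃ p : DirPath A, p.src = u ∧ p.snk = v ∧ p.len = n}

/-- A biased path pair: a common internal vertex `x` with
`dist(s(p),x) > dist(s(q),x)` and `dist(x,t(p)) > dist(x,t(q))`. -/
def BiasedPair (A : V → V → Prop) (p q : DirPath A) : Prop :=
  ∃ x, p.internal x ∧ q.internal x ∧
    ddist A q.src x < ddist A p.src x ∧ ddist A x q.snk < ddist A x p.snk

/-- A rigid token: `v ∈ X ∩ Y` and all incident arcs have `w`-value `0`. -/
def RigidTok [Fintype V] [DecidableEq V] (A : V → V → Prop) (X Y : Finset V) (v : V) : Prop :=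
  v ∈ X ∧ v ∈ Y ∧ ∀ a b, A a b → (a = v ∨ b = v) → wArc A X Y a b = 0

/-- A blocking arc: `w((u,v)) = 1` and every other arc incident to `u` or `v`
has `w`-value `0`. -/
def BlockingArc [Fintype V] [DecidableEq V] (A : V → V → Prop) (X Y : Finset V)
    (u v : V) : Prop :=
  A u v ∧ wArc A X Y u v = 1 ∧
    ∀ a b, A a b → (a, b) ≠ (u, v) → (a = u ∨ b = u ∨ a = v ∨ b = v) →
      wArc A X Y a b = 0

/-- A trajectory of a single token along a reconfiguration sequence. -/
def IsTrajectory [DecidableEq V] (A : V → V → Prop) {ℓ : ℕ}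
    (f : Fin (ℓ + 1) → Finset V) (g : Fin (ℓ + 1) → V) : Prop :=
  (∀ i, g i ∈ f i) ∧ ∀ i : Fin ℓ,
    g i.succ = g i.castSucc ∨
      (f i.castSucc \ f i.succ = {g i.castSucc} ∧ f i.succ \ f i.castSucc = {g i.succ})

/-- Number of steps of a reconfiguration sequence sliding a token from `u` to `v`. -/
noncomputable def movesAlong [DecidableEq V] {ℓ : ℕ} (f : Fin (ℓ + 1) → Finset V)
    (u v : V) : ℕ :=
  (Finset.univ.filter fun i : Fin ℓ =>
    f i.castSucc \ f i.succ = {u} ∧ f i.succ \ f i.castSucc = {v}).card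

/-- Number of forward arc traversals of a walk with vertex list `l`. -/
noncomputable def fwdCount (A : V → V → Prop) (l : List V) : ℕ :=
  (l.zip l.tail).countP fun p => decide (A p.1 p.2)

/-- Number of reverse arc traversals of a walk with vertex list `l`. -/
noncomputable def revCount (A : V → V → Prop) (l : List V) : ℕ :=
  (l.zip l.tail).countP fun p => decide (A p.2 p.1)

/-- Number of traversals of the ordered pair `(a, b)` by a walk with vertex list `l`. -/
def traverseCount [DecidableEq V] (l : List V) (a b : V) : ℕ :=
  (l.zip l.tail).count (a, b)

/-- A vertex `v` touches a directed path `p` if `N[v]` meets the vertex set of `p`. -/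
def Touches (A : V → V → Prop) (v : V) (p : DirPath A) : Prop :=
  ∃ u, p.mem u ∧ (u = v ∨ (underlying A).Adj v u)

/-- Independence in an undirected graph (for undirected token sliding). -/
def UIndep (G : SimpleGraph V) (I : Finset V) : Prop :=
  ∀ u ∈ I, ∀ v ∈ I, ¬ G.Adj u v

/-- One undirected token-sliding step along an edge. -/
def UIsStep [DecidableEq V] (G : SimpleGraph V) (I J : Finset V) : Prop :=
  ∃ u v, G.Adj u v ∧ I \ J = {u} ∧ J \ I = {v}

/-- Reconfigurability under (undirected) token sliding. -/
def UReconfigurable [DecidableEq V] (G : SimpleGraph V) (I J : Finset V) : Prop :=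
  ∃ (ℓ : ℕ) (f : Fin (ℓ + 1) → Finset V),
    (∀ i, UIndep G (f i)) ∧ (∀ i : Fin ℓ, UIsStep G (f i.castSucc) (f i.succ)) ∧
    f 0 = I ∧ f (Fin.last ℓ) = J

/-!
Every arc `e = (a, b)` of a tree is a bridge, so a move along `e` takes a token out of `C⁻_e`,
while a move along any other arc stays on one side of `e` (the reverse of `e` is not an arc).
Hence `w(e; I, J)` is `1` for a move `I → J` along `e` and `0` for any other move, and summing
over the sequence the values `w(e; f i, f (i + 1))` telescope to `w(e; I⁰, Iᵗ)`.
-/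

open Finset

theorem Fin.sum_castSucc_sub_succ {M : Type*} [AddCommGroup M] :
    ∀ {n : ℕ} (g : Fin (n + 1) → M),
      ∑ i : Fin n, (g i.castSucc - g i.succ) = g 0 - g (Fin.last n)
  | 0, g => by simp
  | n + 1, g => by
    rw [Fin.sum_univ_castSucc]
    simp only [Fin.succ_castSucc]
    rw [Fin.sum_castSucc_sub_succ (fun i => g i.castSucc), Fin.castSucc_zero, Fin.succ_last]
    abel

theorem Finset.natCast_card_filter_sub_of_sdiff_eq_singleton {α R : Type*} [DecidableEq α]
    [AddCommGroupWithOne R] {s t : Finset α} {u v : α} (hst : s \ t = {u}) (hts : t \ s = {v})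
    (p : α → Prop) [DecidablePred p] :
    (#{x ∈ s | p x} : R) - #{x ∈ t | p x} = (if p u then 1 else 0) - (if p v then 1 else 0) := by
  rw [natCast_card_filter, natCast_card_filter, ← sum_sdiff_sub_sum_sdiff, hst, hts,
    sum_singleton, sum_singleton]

theorem SimpleGraph.reachable_deleteEdges_iff_of_adj {W : Type*} {G : SimpleGraph W}
    {e : Sym2 W} {x u v : W} (huv : G.Adj u v) (he : s(u, v) ≠ e) :
    (G.deleteEdges {e}).Reachable x u ↔ (G.deleteEdges {e}).Reachable x v := by
  have hadj : (G.deleteEdges {e}).Adj u v := by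
    rw [deleteEdges_adj]
    exact ⟨huv, by simpa using he⟩
  exact ⟨fun h => h.trans hadj.reachable, fun h => h.trans hadj.symm.reachable⟩

namespace IsPolytree

variable {A : V → V → Prop} {a b : V}

theorem adj (hT : IsPolytree A) {u v : V} (huv : A u v) : (underlying A).Adj u v :=
  (SimpleGraph.fromRel_adj _ _ _).2 ⟨fun h => hT.1 u (h ▸ huv), Or.inl huv⟩

theorem not_inCminus_head (hT : IsPolytree A) (hab : A a b) : ¬ InCminus A a b b :=
  SimpleGraph.isAcyclic_iff_forall_adj_isBridge.mp hT.2.2.isAcyclic (hT.adj hab)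

theorem inCminus_iff_of_arc (hT : IsPolytree A) (hab : A a b) {u v : V} (huv : A u v)
    (hne : ¬ (u = a ∧ v = b)) : InCminus A a b u ↔ InCminus A a b v := by
  refine SimpleGraph.reachable_deleteEdges_iff_of_adj (hT.adj huv) ?_
  intro h
  rcases Sym2.eq_iff.mp h with ⟨rfl, rfl⟩ | ⟨rfl, rfl⟩
  · exact hne ⟨rfl, rfl⟩
  · exact hT.2.1 _ _ huv hab

theorem wArc_of_isStep [Fintype V] [DecidableEq V] (hT : IsPolytree A) (hab : A a b)
    {I J : Finset V} (hstep : IsStep A I J) :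
    wArc A I J a b = if I \ J = {a} ∧ J \ I = {b} then 1 else 0 := by
  obtain ⟨u, v, huv, hIJ, hJI⟩ := hstep
  rw [wArc, natCast_card_filter_sub_of_sdiff_eq_singleton hIJ hJI, hIJ, hJI]
  simp only [singleton_inj]
  by_cases h : u = a ∧ v = b
  · obtain ⟨rfl, rfl⟩ := h
    rw [if_pos (show InCminus A u v u from .refl u), if_neg (hT.not_inCminus_head huv),
      if_pos ⟨rfl, rfl⟩, sub_zero]
  · rw [if_congr (hT.inCminus_iff_of_arc hab huv h) rfl rfl, sub_self, if_neg h]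

end IsPolytree

theorem stmt_4_general [Fintype V] [DecidableEq V] (A : V → V → Prop) (hT : IsPolytree A)
    (I0 It : Finset V)
    {ℓ : ℕ} (f : Fin (ℓ + 1) → Finset V) (hf : IsReconfSeq A f)
    (hstart : f 0 = I0) (hend : f (Fin.last ℓ) = It) :
    ∀ a b, A a b → (movesAlong f a b : ℤ) = wArc A I0 It a b := by
  intro a b hab
  calc (movesAlong f a b : ℤ)
      = ∑ i : Fin ℓ, if f i.castSucc \ f i.succ = {a} ∧ f i.succ \ f i.castSucc = {b}
          then 1 else 0 := natCast_card_filter _ _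
    _ = ∑ i : Fin ℓ, wArc A (f i.castSucc) (f i.succ) a b :=
        sum_congr rfl fun i _ => (hT.wArc_of_isStep hab (hf.2 i)).symm
    _ = wArc A (f 0) (f (Fin.last ℓ)) a b :=
        Fin.sum_castSucc_sub_succ fun i => (#{x ∈ f i | InCminus A a b x} : ℤ)
    _ = wArc A I0 It a b := by rw [hstart, hend]

/-- In any reconfiguration sequence from `I⁰` to `Iᵗ`, the number of
moves sliding a token along an arc `e = (a,b)` equals `w(e; I⁰, Iᵗ)`. -/
theorem stmt_4 [Fintype V] [DecidableEq V] (A : V → V → Prop) (hT : IsPolytree A)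
    (I0 It : Finset V) (h0 : IndepF A I0) (ht : IndepF A It) (hcard : I0.card = It.card)
    {ℓ : ℕ} (f : Fin (ℓ + 1) → Finset V) (hf : IsReconfSeq A f)
    (hstart : f 0 = I0) (hend : f (Fin.last ℓ) = It) :
    ∀ a b, A a b → (movesAlong f a b : ℤ) = wArc A I0 It a b :=
  stmt_4_general A hT I0 It f hf hstart hend
end

section
/- Let T = (V, A) be a polytree and I⁰, Iᵗ independent sets with |I⁰| = |Iᵗ| such that I⁰ is reconfigurable into Iᵗ. Suppose v ∈ I⁰ ∩ Iᵗ satisfies w(e; I⁰, Iᵗ) = 0 for all arcs e incident to v (v carries a rigid token). If there exists a neighbor u of v and an arc e incident to u with w(e; I⁰, Iᵗ) > 0, then a contradiction arises; that is, in this situation (T, I⁰, Iᵗ) is a no-instance of directed token sliding. -/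
open scoped Classical

variable {V : Type*}

/-! For an arc `e = (a, b)` of a polytree, `e` is the only edge between `C⁻_e` and the rest
of the tree, and it points out of `C⁻_e`. So a slide never brings a token into `C⁻_e`, and takes
one out exactly when it is a slide along `e`; hence along any reconfiguration sequence
`w(e; I⁰, Iᵗ)` is the number of slides along `e`. A slide of the rigid token away from `v` would
be counted by an arc with `w = 0`, so `v` stays occupied throughout, while `w > 0` on an arc at
`u` forces a slide along it, which puts a token on `u`, next to `v`. -/

section Polytree

variable {A : V → V → Prop} {a b x y : V}

theorem inCminus_of_adj (hadj : (underlying A).Adj x y) (hx : InCminus A a b x)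
    (hxy : s(x, y) ≠ s(a, b)) : InCminus A a b y :=
  hx.trans (SimpleGraph.Adj.reachable ((SimpleGraph.deleteEdges_adj ..).mpr ⟨hadj, hxy⟩))

theorem IsPolytree.adj_of_arc (hT : IsPolytree A) (hxy : A x y) : (underlying A).Adj x y :=
  (SimpleGraph.fromRel_adj A x y).mpr ⟨fun h => hT.1 x (h ▸ hxy), Or.inl hxy⟩

theorem IsPolytree.not_inCminus_head_s6 (hT : IsPolytree A) (hab : A a b) :
    ¬ InCminus A a b b :=
  SimpleGraph.isBridge_iff.mp <|
    SimpleGraph.isAcyclic_iff_forall_adj_isBridge.mp hT.2.2.isAcyclic (hT.adj_of_arc hab)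

theorem IsPolytree.inCminus_tail_of_head (hT : IsPolytree A) (hab : A a b) (hxy : A x y)
    (hy : InCminus A a b y) : InCminus A a b x := by
  by_contra hx
  have hedge : s(y, x) = s(a, b) := by
    by_contra hne
    exact hx (inCminus_of_adj (hT.adj_of_arc hxy).symm hy hne)
  rcases Sym2.eq_iff.mp hedge with ⟨rfl, rfl⟩ | ⟨rfl, -⟩
  · exact hT.2.1 _ _ hab hxy
  · exact hT.not_inCminus_head_s6 hab hy

theorem IsPolytree.arc_leaves_inCminus_iff (hT : IsPolytree A) (hab : A a b) (hxy : A x y) :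
    (InCminus A a b x ∧ ¬ InCminus A a b y) ↔ x = a ∧ y = b := by
  constructor
  · rintro ⟨hx, hy⟩
    have hedge : s(x, y) = s(a, b) := by
      by_contra hne
      exact hy (inCminus_of_adj (hT.adj_of_arc hxy) hx hne)
    rcases Sym2.eq_iff.mp hedge with h | ⟨rfl, -⟩
    · exact h
    · exact absurd hx (hT.not_inCminus_head_s6 hab)
  · rintro ⟨rfl, rfl⟩
    exact ⟨SimpleGraph.Reachable.refl x, hT.not_inCminus_head_s6 hab⟩

end Polytree

/-- `|C⁻_(a,b) ∩ I|`. -/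
noncomputable def tailCount (A : V → V → Prop) (a b : V) (I : Finset V) : ℕ :=
  (I.filter (InCminus A a b)).card

theorem Finset.card_filter_add_card_filter_sdiff [DecidableEq V] (p : V → Prop)
    [DecidablePred p] (I J : Finset V) :
    (J.filter p).card + ((I \ J).filter p).card =
      (I.filter p).card + ((J \ I).filter p).card := by
  have hsplit : ∀ S T : Finset V, ((S \ T).filter p).card + (T.filter p).card =
      ((S ∪ T).filter p).card := fun S T => by
    rw [Finset.filter_union, ← Finset.card_sdiff_add_card]
    congr 2
    ext
    simp only [Finset.mem_filter, Finset.mem_sdiff]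
    tauto
  rw [add_comm, hsplit, add_comm (I.filter p).card, hsplit, Finset.union_comm]

section Sliding

variable [DecidableEq V] {A : V → V → Prop} {a b : V}

theorem IsPolytree.tailCount_step (hT : IsPolytree A) (hab : A a b) {I J : Finset V}
    (hstep : IsStep A I J) :
    tailCount A a b J + (if I \ J = {a} ∧ J \ I = {b} then 1 else 0) = tailCount A a b I := by
  obtain ⟨x, y, hxy, h1, h2⟩ := hstep
  have hcount := Finset.card_filter_add_card_filter_sdiff (InCminus A a b) I J
  have hleave := hT.arc_leaves_inCminus_iff hab hxy
  have henter := hT.inCminus_tail_of_head hab hxy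
  rw [h1, h2, Finset.filter_singleton, Finset.filter_singleton] at hcount
  simp only [tailCount, h1, h2, Finset.singleton_inj]
  by_cases hx : InCminus A a b x <;> by_cases hy : InCminus A a b y <;>
    simp only [hx, hy, if_true, if_false, Finset.card_singleton, Finset.card_empty] at hcount
  · rw [if_neg fun h => (hleave.mpr h).2 hy]; omega
  · rw [if_pos (hleave.mp ⟨hx, hy⟩)]; omega
  · exact absurd (henter hy) hx
  · rw [if_neg fun h => hx (hleave.mpr h).1]; omega

theorem IsPolytree.tailCount_eq_add_movesAlong (hT : IsPolytree A) (hab : A a b) :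
    ∀ {ℓ : ℕ} (f : Fin (ℓ + 1) → Finset V),
      (∀ i : Fin ℓ, IsStep A (f i.castSucc) (f i.succ)) →
      tailCount A a b (f 0) = tailCount A a b (f (Fin.last ℓ)) + movesAlong f a b
  | 0, f, _ => by simp [movesAlong]
  | ℓ + 1, f, hf => by
    have hfirst := hT.tailCount_step hab (hf 0)
    have hrest := hT.tailCount_eq_add_movesAlong hab (fun i => f i.succ)
      fun i => by rw [Fin.succ_castSucc]; exact hf i.succ
    have hmoves : movesAlong f a b =
        (if f (Fin.castSucc 0) \ f (Fin.succ 0) = {a} ∧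
            f (Fin.succ 0) \ f (Fin.castSucc 0) = {b} then 1 else 0) +
          movesAlong (fun i => f i.succ) a b := by
      simp only [movesAlong, Finset.card_filter, Fin.sum_univ_succ, Fin.succ_castSucc]
    rw [Fin.castSucc_zero] at hfirst hmoves
    rw [← Fin.succ_last]
    omega

variable [Fintype V] {ℓ : ℕ} {f : Fin (ℓ + 1) → Finset V}

theorem IsPolytree.wArc_eq_movesAlong (hT : IsPolytree A) (hab : A a b)
    (hf : ∀ i : Fin ℓ, IsStep A (f i.castSucc) (f i.succ)) :
    wArc A (f 0) (f (Fin.last ℓ)) a b = movesAlong f a b := by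
  change (tailCount A a b (f 0) : ℤ) - tailCount A a b (f (Fin.last ℓ)) = _
  rw [hT.tailCount_eq_add_movesAlong hab f hf]
  push_cast
  ring

theorem IsPolytree.mem_of_wArc_eq_zero (hT : IsPolytree A)
    (hf : ∀ i : Fin ℓ, IsStep A (f i.castSucc) (f i.succ)) {v : V} (hv : v ∈ f 0)
    (hrigid : ∀ z, A v z → wArc A (f 0) (f (Fin.last ℓ)) v z = 0) (i : Fin (ℓ + 1)) :
    v ∈ f i := by
  induction i using Fin.induction with
  | zero => exact hv
  | succ i ih =>
    by_contra hvi
    obtain ⟨x, y, hxy, h1, h2⟩ := hf i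
    obtain rfl : x = v := by
      have hleft : v ∈ f i.castSucc \ f i.succ := Finset.mem_sdiff.mpr ⟨ih, hvi⟩
      rw [h1] at hleft
      exact (Finset.mem_singleton.mp hleft).symm
    have hmoved : 0 < movesAlong f x y :=
      Finset.card_pos.mpr ⟨i, Finset.mem_filter.mpr ⟨Finset.mem_univ i, h1, h2⟩⟩
    have hcount := hT.wArc_eq_movesAlong hxy hf
    rw [hrigid y hxy] at hcount
    omega

theorem IsPolytree.exists_step_of_wArc_pos (hT : IsPolytree A) (hab : A a b)
    (hf : ∀ i : Fin ℓ, IsStep A (f i.castSucc) (f i.succ))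
    (hpos : 0 < wArc A (f 0) (f (Fin.last ℓ)) a b) :
    ∃ i : Fin ℓ, a ∈ f i.castSucc ∧ b ∈ f i.succ := by
  rw [hT.wArc_eq_movesAlong hab hf, Nat.cast_pos] at hpos
  obtain ⟨i, hi⟩ := Finset.card_pos.mp hpos
  obtain ⟨h1, h2⟩ := (Finset.mem_filter.mp hi).2
  have ha : a ∈ f i.castSucc \ f i.succ := h1 ▸ Finset.mem_singleton_self a
  have hb : b ∈ f i.succ \ f i.castSucc := h2 ▸ Finset.mem_singleton_self b
  exact ⟨i, (Finset.mem_sdiff.mp ha).1, (Finset.mem_sdiff.mp hb).1⟩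

end Sliding

theorem stmt_6_general [Fintype V] [DecidableEq V] (A : V → V → Prop) (hT : IsPolytree A)
    (I0 It : Finset V) (v : V) (hv0 : v ∈ I0)
    (hrigid : ∀ a b, A a b → (a = v ∨ b = v) → wArc A I0 It a b = 0)
    (u : V) (hu : (underlying A).Adj v u)
    (a b : V) (hab : A a b) (hinc : a = u ∨ b = u) (hpos : 0 < wArc A I0 It a b) :
    ¬ Reconfigurable A I0 It := by
  rintro ⟨ℓ, f, ⟨hindep, hsteps⟩, rfl, rfl⟩
  have hv : ∀ i, v ∈ f i :=
    hT.mem_of_wArc_eq_zero hsteps hv0 fun z hvz => hrigid v z hvz (Or.inl rfl)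
  obtain ⟨i, ha, hb⟩ := hT.exists_step_of_wArc_pos hab hsteps hpos
  rcases hinc with rfl | rfl
  · exact hindep _ v (hv _) a ha hu
  · exact hindep _ v (hv _) b hb hu

/-- If `v` carries a rigid token and some neighbor `u` of `v` has an
incident arc of positive `w`-value, then the instance is a no-instance. -/
theorem stmt_6 [Fintype V] [DecidableEq V] (A : V → V → Prop) (hT : IsPolytree A)
    (I0 It : Finset V) (h0 : IndepF A I0) (ht : IndepF A It) (hcard : I0.card = It.card)
    (v : V) (hv0 : v ∈ I0) (hvt : v ∈ It)
    (hrigid : ∀ a b, A a b → (a = v ∨ b = v) → wArc A I0 It a b = 0)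
    (u : V) (hu : (underlying A).Adj v u)
    (a b : V) (hab : A a b) (hinc : a = u ∨ b = u) (hpos : 0 < wArc A I0 It a b) :
    ¬ Reconfigurable A I0 It :=
  stmt_6_general A hT I0 It v hv0 hrigid u hu a b hab hinc hpos
end
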